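/- Let B ≥ 1 be an integer, γ > 0 and R ≥ 0. Then the Gaussian-input outage region {α : Fin B → ℝ | (1/B) ∑_{b=1}^B (1/2) log₂(1 + 2γ α_b²) < R} is contained in the open ball {α | ∑_b α_b² < (4^{BR} − 1)/(2γ)}. -/
import Mathlib


open Finset Real

lemma aux_prod {ι : Type*} (s : Finset ι) (f : ι → ℝ) (hf : ∀ i ∈ s, 0 ≤ f i) :
    1 + ∑ i ∈ s, f i ≤ ∏ i ∈ s, (1 + f i) := by
  induction s using Finset.cons_induction with
  | empty => simp
  | cons a s ha ih =>
    rw [Finset.sum_cons, Finset.prod_cons]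
    have h1 : 0 ≤ f a := hf a (Finset.mem_cons_self a s)
    have h2 : ∀ i ∈ s, 0 ≤ f i := fun i hi => hf i (Finset.mem_cons_of_mem hi)
    have h3 : 0 ≤ ∑ i ∈ s, f i := Finset.sum_nonneg h2
    calc 1 + (f a + ∑ i ∈ s, f i)
        ≤ (1 + f a) * (1 + ∑ i ∈ s, f i) := by nlinarith
      _ ≤ (1 + f a) * ∏ i ∈ s, (1 + f i) := by
          apply mul_le_mul_of_nonneg_left (ih h2); linarith

theorem stmt_2 (B : ℕ) (hB : 1 ≤ B) (γ : ℝ) (hγ : 0 < γ) (R : ℝ) (hR : 0 ≤ R) :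
    {α : Fin B → ℝ | (1 / B) * ∑ b, (1 / 2) * Real.logb 2 (1 + 2 * γ * (α b) ^ 2) < R} ⊆
      {α : Fin B → ℝ | ∑ b, (α b) ^ 2 < ((4 : ℝ) ^ ((B : ℝ) * R) - 1) / (2 * γ)} := by
  intro α hα
  simp only [Set.mem_setOf_eq] at hα ⊢
  have hBpos : (0 : ℝ) < B := by exact_mod_cast hB
  set S := ∑ b, (α b) ^ 2 with hS
  have hterm : ∀ b : Fin B, (0 : ℝ) ≤ 2 * γ * (α b) ^ 2 := fun b => by positivity
  have hpos : ∀ b : Fin B, (0 : ℝ) < 1 + 2 * γ * (α b) ^ 2 := fun b => by nlinarith [hterm b]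
  -- sum of logs < 2BR
  have hsum : ∑ b, Real.logb 2 (1 + 2 * γ * (α b) ^ 2) < 2 * (B * R) := by
    have := (mul_lt_mul_iff_right₀ hBpos).mpr hα
    rw [← mul_assoc, mul_one_div, div_self (ne_of_gt hBpos), one_mul] at this
    rw [← Finset.mul_sum] at this
    linarith
  -- log of product = sum of logs
  have hlogprod : Real.logb 2 (∏ b, (1 + 2 * γ * (α b) ^ 2)) =
      ∑ b, Real.logb 2 (1 + 2 * γ * (α b) ^ 2) :=
    Real.logb_prod _ _ (fun b _ => ne_of_gt (hpos b))
  have hprod : 1 + 2 * γ * S ≤ ∏ b, (1 + 2 * γ * (α b) ^ 2) := by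
    have := aux_prod Finset.univ (fun b => 2 * γ * (α b) ^ 2) (fun b _ => hterm b)
    rw [hS, Finset.mul_sum]
    simpa [Finset.mul_sum] using this
  have hSpos : (0 : ℝ) < 1 + 2 * γ * S := by
    have : 0 ≤ S := Finset.sum_nonneg fun b _ => sq_nonneg _
    nlinarith
  have hlog : Real.logb 2 (1 + 2 * γ * S) < 2 * (B * R) := by
    calc Real.logb 2 (1 + 2 * γ * S) ≤ Real.logb 2 (∏ b, (1 + 2 * γ * (α b) ^ 2)) :=
          Real.logb_le_logb_of_le (by norm_num) hSpos hprod
      _ = _ := hlogprod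
      _ < _ := hsum
  have hlt : 1 + 2 * γ * S < (2 : ℝ) ^ (2 * (B * R)) :=
    (Real.logb_lt_iff_lt_rpow (by norm_num) hSpos).mp hlog
  have h4 : (4 : ℝ) ^ ((B : ℝ) * R) = (2 : ℝ) ^ (2 * (B * R)) := by
    rw [show (4 : ℝ) = (2 : ℝ) ^ (2 : ℝ) by norm_num [Real.rpow_natCast],
      ← Real.rpow_mul (by norm_num)]
  rw [h4, lt_div_iff₀ (by positivity)]
  linarith
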